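/- Fix a real number v̄ > 0, an even integer l ≥ 1 with E_l = (πl)², and a compact set K ⊂ ℝ. There exist ε₀ > 0 and a constant C such that for all v ∈ K and all 0 < ε ≤ ε₀, writing ṽ = v − v̄: ‖M^ε·T(v, E_l + ε)·(M^ε)^{−1} − ([[1 − η·ε^{1/2}, 0],[0, 1 + η·ε^{1/2}]] + ε^{1/2}·(ṽ/(2·(2v̄E_l)^{1/2}))·[[−1, 1],[−1, 1]] + ε·(v/(4E_l))·[[1, 1],[1, 1]])‖ ≤ C·ε^{3/2}. -/

import Mathlib

open Matrix Real Filter MeasureTheory ProbabilityTheory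

noncomputable section

/-- Principal branch of the complex square root. -/
def csqrt (z : ℂ) : ℂ := z ^ (1/2 : ℂ)

/-- One-step transfer matrix of the random Kronig-Penney model at complex energy. -/
def TmatC (v : ℝ) (z : ℂ) : Matrix (Fin 2) (Fin 2) ℂ :=
  !![1, (v : ℂ); 0, 1] *
  !![Complex.cos (csqrt z), -(csqrt z) * Complex.sin (csqrt z);
     Complex.sin (csqrt z) / (csqrt z), Complex.cos (csqrt z)]

/-- One-step transfer matrix at positive real energy. -/
def TmatR (v E : ℝ) : Matrix (Fin 2) (Fin 2) ℝ :=
  !![1, v; 0, 1] *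
  !![Real.cos (Real.sqrt E), -(Real.sqrt E) * Real.sin (Real.sqrt E);
     Real.sin (Real.sqrt E) / Real.sqrt E, Real.cos (Real.sqrt E)]

/-- Euclidean norm of a vector in ℝ². -/
def vnormR (x : Fin 2 → ℝ) : ℝ := ‖(WithLp.equiv 2 (Fin 2 → ℝ)).symm x‖

/-- Euclidean norm of a vector in ℂ². -/
def vnormC (x : Fin 2 → ℂ) : ℝ := ‖(WithLp.equiv 2 (Fin 2 → ℂ)).symm x‖

/-- Operator norm of a real 2×2 matrix w.r.t. the Euclidean norm. -/
def opR (A : Matrix (Fin 2) (Fin 2) ℝ) : ℝ :=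
  ‖LinearMap.toContinuousLinearMap (Matrix.toEuclideanLin A)‖

/-- Operator norm of a complex 2×2 matrix w.r.t. the Euclidean norm. -/
def opC (A : Matrix (Fin 2) (Fin 2) ℂ) : ℝ :=
  ‖LinearMap.toContinuousLinearMap (Matrix.toEuclideanLin A)‖

/-- The unit vector with angle θ. -/
def eth (θ : ℝ) : Fin 2 → ℝ := ![Real.cos θ, Real.sin θ]

/-- The circle map S_A on [0, 2π) induced by an (invertible) matrix A. -/
def SMap (A : Matrix (Fin 2) (Fin 2) ℝ) (θ : ℝ) : ℝ :=
  toIcoMod Real.two_pi_pos 0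
    (Complex.arg (Complex.mk ((A.mulVec (eth θ)) 0) ((A.mulVec (eth θ)) 1)))

/-- critical energy -/
def El (l : ℕ) : ℝ := (Real.pi * l) ^ 2

/-- transfer matrix product T^E(n,m) = T(v_n) ⋯ T(v_{m+1}), real energy, ℕ indices. -/
def TprodR (v : ℕ → ℝ) (E : ℝ) (n m : ℕ) : Matrix (Fin 2) (Fin 2) ℝ :=
  ((List.range (n - m)).map fun k => TmatR (v (n - k)) E).prod

/-- transfer matrix product, complex energy, ℤ indices. -/
def TprodZC (v : ℤ → ℝ) (z : ℂ) (n m : ℤ) : Matrix (Fin 2) (Fin 2) ℂ :=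
  ((List.range (n - m).toNat).map fun k => TmatC (v (n - k)) z).prod

/-- The basis change matrix M^ε = M₂ · M₁. -/
def Meps (vb : ℝ) (l : ℕ) (ε : ℝ) : Matrix (Fin 2) (Fin 2) ℝ :=
  (let b : ℝ := (vb * El l / 2) ^ ((1 : ℝ)/4)
   !![1/(2*b), -b; 1/(2*b), b]) * !![Real.sqrt ε, 0; 0, 1]

/-- Rotation matrix by angle β. -/
def Rot (β : ℝ) : Matrix (Fin 2) (Fin 2) ℝ :=
  !![Real.cos β, -Real.sin β; Real.sin β, Real.cos β]

/-- Modified Prüfer phases. -/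
def pruefer (vb : ℝ) (l : ℕ) (ε : ℝ) (v : ℕ → ℝ) (θ₀ : ℝ) : ℕ → ℝ
  | 0 => θ₀
  | n + 1 =>
      SMap (Meps vb l ε * TmatR (v (n + 1)) (El l - ε) * (Meps vb l ε)⁻¹)
        (pruefer vb l ε v θ₀ n)


/-!
Write `p = π l` and `k = √(E_l + ε)`. Since `l` is even, `cos p = 1`, so the trigonometric entries
of `T(v, E_l + ε)` only see `δ = k - p`, and `δ (k + p) = ε` gives `δ ≤ ε / (2p)`. Hence
`k sin k = O(ε)`, `cos k - 1 = O(ε²)` and `sin k / k = ε / (2 E_l) + O(ε²)`. Conjugating by `M^ε`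
and subtracting the normal form leaves an exact linear combination of these three errors whose
coefficients are at worst of size `ε^{-1/2}`, which yields the bound `C ε^{3/2}`.
-/

section NearPeriod

variable {p k s : ℝ}

lemma sin_sub_of_cos_eq_one (h : cos p = 1) (x : ℝ) : sin (x - p) = sin x := by
  simp [sin_sub, h, sin_eq_zero_iff_cos_eq.2 (Or.inl h)]

lemma cos_sub_of_cos_eq_one (h : cos p = 1) (x : ℝ) : cos (x - p) = cos x := by
  simp [cos_sub, h, sin_eq_zero_iff_cos_eq.2 (Or.inl h)]

lemma abs_sin_sub_self_le {x : ℝ} (hx : 0 ≤ x) : |sin x - x| ≤ x ^ 3 / 6 := by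
  rw [abs_sub_comm, abs_of_nonneg (sub_nonneg.2 (sin_le hx))]
  linarith [sin_ge_sub_cube hx]

lemma le_of_sq_eq_sq_add_sq (hk : 0 < k) (hks : k ^ 2 = p ^ 2 + s ^ 2) : p ≤ k := by
  nlinarith

lemma sub_le_sq_div_of_sq_eq_sq_add_sq (hp : 0 < p) (hk : 0 < k) (hks : k ^ 2 = p ^ 2 + s ^ 2) :
    k - p ≤ s ^ 2 / (2 * p) := by
  rw [le_div_iff₀ (by positivity)]
  nlinarith [le_of_sq_eq_sq_add_sq hk hks]

lemma abs_mul_sin_le (hp : 0 < p) (hk : 0 < k) (hks : k ^ 2 = p ^ 2 + s ^ 2) (hcos : cos p = 1) :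
    |k * sin k| ≤ s ^ 2 := by
  have hpk := le_of_sq_eq_sq_add_sq hk hks
  rw [← sin_sub_of_cos_eq_one hcos, abs_mul, abs_of_pos hk]
  calc k * |sin (k - p)| ≤ k * (k - p) := by
        gcongr; simpa [abs_of_nonneg (sub_nonneg.2 hpk)] using abs_sin_le_abs (x := k - p)
    _ ≤ s ^ 2 := by nlinarith

lemma abs_cos_sub_one_le (hp : 0 < p) (hk : 0 < k) (hks : k ^ 2 = p ^ 2 + s ^ 2)
    (hcos : cos p = 1) : |cos k - 1| ≤ s ^ 4 / (8 * p ^ 2) := by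
  have hpk := le_of_sq_eq_sq_add_sq hk hks
  rw [← cos_sub_of_cos_eq_one hcos, abs_sub_comm, abs_of_nonneg (sub_nonneg.2 (cos_le_one _))]
  calc 1 - cos (k - p) ≤ (k - p) ^ 2 / 2 := by linarith [one_sub_sq_div_two_le_cos (x := k - p)]
    _ ≤ (s ^ 2 / (2 * p)) ^ 2 / 2 := by
        gcongr
        exact sub_le_sq_div_of_sq_eq_sq_add_sq hp hk hks
    _ = s ^ 4 / (8 * p ^ 2) := by field_simp; ring

lemma abs_sin_div_sub_le (hp : 0 < p) (hk : 0 < k) (hks : k ^ 2 = p ^ 2 + s ^ 2)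
    (hcos : cos p = 1) (hs1 : s ^ 2 ≤ 1) :
    |sin k / k - s ^ 2 / (2 * p ^ 2)| ≤ s ^ 4 / p ^ 4 := by
  have hδ := sub_le_sq_div_of_sq_eq_sq_add_sq hp hk hks
  have hpk := le_of_sq_eq_sq_add_sq hk hks
  have hδ0 : 0 ≤ k - p := sub_nonneg.2 hpk
  set δ := k - p
  have hlin : δ / k - s ^ 2 / (2 * p ^ 2)
      = -(s ^ 2 * (s ^ 2 + p * δ)) / (2 * p ^ 2 * (k * (k + p))) := by
    rw [div_sub_div _ _ hk.ne' (by positivity), div_eq_div_iff (by positivity) (by positivity)]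
    linear_combination (2 * p ^ 2 * k * (2 * p ^ 2 - s ^ 2)) * hks
  have hsin : |sin δ - δ| / k ≤ s ^ 4 / (48 * p ^ 4) := by
    calc |sin δ - δ| / k ≤ δ ^ 3 / 6 / p := by
          gcongr
          exact abs_sin_sub_self_le hδ0
      _ ≤ (s ^ 2 / (2 * p)) ^ 3 / 6 / p := by gcongr
      _ = s ^ 4 / (48 * p ^ 4) * s ^ 2 := by field_simp; ring
      _ ≤ s ^ 4 / (48 * p ^ 4) := mul_le_of_le_one_right (by positivity) hs1
  have hnum : 0 ≤ s ^ 2 * (s ^ 2 + p * δ) :=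
    mul_nonneg (sq_nonneg s) (add_nonneg (sq_nonneg s) (mul_nonneg hp.le hδ0))
  have hrat : s ^ 2 * (s ^ 2 + p * δ) / (2 * p ^ 2 * (k * (k + p)))
      ≤ 3 * s ^ 4 / (8 * p ^ 4) := by
    have hpδ : p * δ ≤ s ^ 2 / 2 := by
      calc p * δ ≤ p * (s ^ 2 / (2 * p)) := by gcongr
        _ = s ^ 2 / 2 := by field_simp
    calc s ^ 2 * (s ^ 2 + p * δ) / (2 * p ^ 2 * (k * (k + p)))
        ≤ s ^ 2 * (3 * s ^ 2 / 2) / (2 * p ^ 2 * (p * (p + p))) := by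
          gcongr
          linarith
      _ = 3 * s ^ 4 / (8 * p ^ 4) := by field_simp; ring
  rw [← sin_sub_of_cos_eq_one hcos, show sin δ / k - s ^ 2 / (2 * p ^ 2)
    = (sin δ - δ) / k + (δ / k - s ^ 2 / (2 * p ^ 2)) by ring, hlin]
  calc |(sin δ - δ) / k + -(s ^ 2 * (s ^ 2 + p * δ)) / (2 * p ^ 2 * (k * (k + p)))|
      ≤ |sin δ - δ| / k + s ^ 2 * (s ^ 2 + p * δ) / (2 * p ^ 2 * (k * (k + p))) := by
        refine (abs_add_le _ _).trans_eq ?_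
        rw [abs_div, abs_of_pos hk, neg_div, abs_neg,
          abs_of_nonneg (div_nonneg hnum (by positivity))]
    _ ≤ s ^ 4 / (48 * p ^ 4) + 3 * s ^ 4 / (8 * p ^ 4) := add_le_add hsin hrat
    _ ≤ s ^ 4 / p ^ 4 := by
        rw [show s ^ 4 / (48 * p ^ 4) + 3 * s ^ 4 / (8 * p ^ 4) = 19 / 48 * (s ^ 4 / p ^ 4) by
          field_simp; ring]
        exact mul_le_of_le_one_left (by positivity) (by norm_num)

end NearPeriod

lemma norm_error_combination_le {E : Type*} [SeminormedAddCommGroup E] [NormedSpace ℝ E]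
    (J A B I : E) {α β b s v R X Y Z : ℝ} (hb : 0 < b) (hs : 0 < s) (hs1 : s ≤ 1) (hv : |v| ≤ R)
    (hX : |X| ≤ α * s ^ 4) (hY : |Y| ≤ s ^ 2) (hZ : |Z| ≤ β * s ^ 4) :
    ‖X • ((v / 2) • J + (b ^ 2 / s) • A) + (s / (4 * b ^ 2) * (Y - v * Z)) • B + Z • I‖
      ≤ (α * (R / 2 * ‖J‖ + b ^ 2 * ‖A‖) + (1 + R * β) / (4 * b ^ 2) * ‖B‖ + β * ‖I‖) * s ^ 3 := by
  have hα : 0 ≤ α := nonneg_of_mul_nonneg_left ((abs_nonneg X).trans hX) (by positivity)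
  have hβ : 0 ≤ β := nonneg_of_mul_nonneg_left ((abs_nonneg Z).trans hZ) (by positivity)
  have hR : 0 ≤ R := (abs_nonneg v).trans hv
  have h1 : ‖X • ((v / 2) • J + (b ^ 2 / s) • A)‖ ≤ |X| * (|v| / 2 * ‖J‖ + b ^ 2 / s * ‖A‖) := by
    rw [norm_smul, Real.norm_eq_abs]
    gcongr
    refine (norm_add_le _ _).trans_eq ?_
    rw [norm_smul, norm_smul, Real.norm_eq_abs, Real.norm_eq_abs, abs_div, abs_two,
      abs_of_pos (by positivity : 0 < b ^ 2 / s)]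
  have h2 : ‖(s / (4 * b ^ 2) * (Y - v * Z)) • B‖ ≤ s / (4 * b ^ 2) * (|Y| + |v| * |Z|) * ‖B‖ := by
    rw [norm_smul, Real.norm_eq_abs, abs_mul, abs_of_pos (by positivity : 0 < s / (4 * b ^ 2)),
      ← abs_mul]
    gcongr
    exact abs_sub _ _
  have hs4 : s ^ 4 ≤ s ^ 3 := pow_le_pow_of_le_one hs.le hs1 (by norm_num)
  have hs5 : s ^ 5 ≤ s ^ 3 := pow_le_pow_of_le_one hs.le hs1 (by norm_num)
  calc _ ≤ |X| * (|v| / 2 * ‖J‖ + b ^ 2 / s * ‖A‖) + s / (4 * b ^ 2) * (|Y| + |v| * |Z|) * ‖B‖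
        + |Z| * ‖I‖ := by
        refine (norm_add₃_le).trans ?_
        rw [norm_smul Z, Real.norm_eq_abs]
        gcongr
    _ ≤ α * s ^ 4 * (R / 2 * ‖J‖ + b ^ 2 / s * ‖A‖)
        + s / (4 * b ^ 2) * (s ^ 2 + R * (β * s ^ 4)) * ‖B‖ + β * s ^ 4 * ‖I‖ := by gcongr
    _ = α * (R / 2 * ‖J‖ * s ^ 4 + b ^ 2 * ‖A‖ * s ^ 3)
        + (s ^ 3 + R * β * s ^ 5) / (4 * b ^ 2) * ‖B‖ + β * ‖I‖ * s ^ 4 := by field_simp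
    _ ≤ α * (R / 2 * ‖J‖ * s ^ 3 + b ^ 2 * ‖A‖ * s ^ 3)
        + (s ^ 3 + R * β * s ^ 3) / (4 * b ^ 2) * ‖B‖ + β * ‖I‖ * s ^ 3 := by gcongr
    _ = _ := by ring

open scoped Matrix.Norms.L2Operator

lemma opR_eq_norm (A : Matrix (Fin 2) (Fin 2) ℝ) : opR A = ‖A‖ := rfl

lemma Meps_eq {vb b : ℝ} (l : ℕ) (ε : ℝ) (hb : (vb * El l / 2) ^ ((1 : ℝ) / 4) = b) :
    Meps vb l ε = !![√ε / (2 * b), -b; √ε / (2 * b), b] := by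
  rw [Meps, hb]
  ext i j
  fin_cases i <;> fin_cases j <;> simp [div_eq_mul_inv, mul_comm]

lemma inv_hyperbolicBasis {s b : ℝ} (hs : s ≠ 0) (hb : b ≠ 0) :
    (!![s / (2 * b), -b; s / (2 * b), b])⁻¹ = !![b / s, b / s; -(1 / (2 * b)), 1 / (2 * b)] := by
  refine Matrix.inv_eq_right_inv ?_
  ext i j
  fin_cases i <;> fin_cases j <;> simp <;> field_simp <;> ring

lemma conj_transfer_sub_normalForm {s b k E vb : ℝ} (hs : s ≠ 0) (hb : 0 < b) (hk : k ≠ 0)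
    (hE : 0 < E) (hvb : vb = 2 * b ^ 4 / E) (v c S : ℝ) :
    !![s / (2 * b), -b; s / (2 * b), b] * (!![1, v; 0, 1] * !![c, -k * S; S / k, c])
        * (!![s / (2 * b), -b; s / (2 * b), b])⁻¹ -
      (!![1 - √(vb / (2 * E)) * s, 0; 0, 1 + √(vb / (2 * E)) * s]
        + s • (((v - vb) / (2 * √(2 * vb * E))) • !![(-1 : ℝ), 1; -1, 1])
        + s ^ 2 • ((v / (4 * E)) • !![(1 : ℝ), 1; 1, 1]))
    = (S / k - s ^ 2 / (2 * E))
          • ((v / 2) • !![(1 : ℝ), 1; 1, 1] + (b ^ 2 / s) • !![(-1 : ℝ), -1; 1, 1])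
      + (s / (4 * b ^ 2) * (k * S - v * (c - 1))) • !![(1 : ℝ), -1; 1, -1] + (c - 1) • 1 := by
  have hη : √(vb / (2 * E)) = b ^ 2 / E := by
    rw [hvb, show 2 * b ^ 4 / E / (2 * E) = (b ^ 2 / E) ^ 2 by field_simp]
    exact sqrt_sq (by positivity)
  have h2b : √(2 * vb * E) = 2 * b ^ 2 := by
    rw [hvb, show 2 * (2 * b ^ 4 / E) * E = (2 * b ^ 2) ^ 2 by field_simp]
    exact sqrt_sq (by positivity)
  rw [inv_hyperbolicBasis hs hb.ne', hη, h2b]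
  subst hvb
  ext i j
  fin_cases i <;> fin_cases j <;> simp <;> field_simp <;> ring

/-- hyperbolic normal form of the conjugated transfer matrix above E_l. -/
theorem stmt19 (vb : ℝ) (hvb : 0 < vb) (l : ℕ) (hl : 1 ≤ l) (hleven : Even l)
    (K : Set ℝ) (hK : IsCompact K) :
    ∃ ε₀ > (0:ℝ), ∃ C : ℝ, ∀ v ∈ K, ∀ ε : ℝ, 0 < ε → ε ≤ ε₀ →
      opR (Meps vb l ε * TmatR v (El l + ε) * (Meps vb l ε)⁻¹ -
          (!![1 - Real.sqrt (vb / (2 * El l)) * Real.sqrt ε, 0;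
              0, 1 + Real.sqrt (vb / (2 * El l)) * Real.sqrt ε]
            + Real.sqrt ε • (((v - vb) / (2 * Real.sqrt (2 * vb * El l))) •
                !![(-1 : ℝ), 1; -1, 1])
            + ε • ((v / (4 * El l)) • !![(1 : ℝ), 1; 1, 1])))
        ≤ C * ε ^ ((3 : ℝ)/2) := by
  obtain ⟨R, hR⟩ := hK.isBounded.exists_norm_le
  have hp : 0 < π * l := mul_pos pi_pos (Nat.cast_pos.2 hl)
  have hE : 0 < El l := by unfold El; positivity
  have hcos : cos (π * l) = 1 := by
    obtain ⟨m, rfl⟩ := hleven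
    rw [show π * ((m + m : ℕ) : ℝ) = m * (2 * π) by push_cast; ring, cos_nat_mul_two_pi]
  set b := (vb * El l / 2) ^ ((1 : ℝ) / 4) with hb_def
  have hb : 0 < b := by positivity
  have hvb_eq : vb = 2 * b ^ 4 / El l := by
    rw [hb_def, ← rpow_natCast, ← rpow_mul (by positivity)]
    field_simp; norm_num; ring
  refine ⟨1, one_pos,
    ((π * l) ^ 4)⁻¹ * (R / 2 * ‖!![(1 : ℝ), 1; 1, 1]‖ + b ^ 2 * ‖!![(-1 : ℝ), -1; 1, 1]‖)
      + (1 + R * (8 * (π * l) ^ 2)⁻¹) / (4 * b ^ 2) * ‖!![(1 : ℝ), -1; 1, -1]‖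
      + (8 * (π * l) ^ 2)⁻¹ * ‖(1 : Matrix (Fin 2) (Fin 2) ℝ)‖, fun v hv ε hε hε1 => ?_⟩
  obtain ⟨s, hs, rfl⟩ : ∃ s, 0 < s ∧ s ^ 2 = ε := ⟨√ε, sqrt_pos.2 hε, sq_sqrt hε.le⟩
  have hk : 0 < √(El l + s ^ 2) := sqrt_pos.2 (by positivity)
  have hks : √(El l + s ^ 2) ^ 2 = (π * l) ^ 2 + s ^ 2 := sq_sqrt (by positivity)
  rw [Meps_eq l _ hb_def.symm, sqrt_sq hs.le, opR_eq_norm, TmatR,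
    conj_transfer_sub_normalForm hs.ne' hb hk.ne' hE hvb_eq,
    show (s ^ 2) ^ ((3 : ℝ) / 2) = s ^ 3 by rw [← rpow_natCast, ← rpow_mul hs.le]; norm_num]
  exact norm_error_combination_le _ _ _ _ hb hs (by nlinarith) (by simpa using hR v hv)
    ((abs_sin_div_sub_le hp hk hks hcos hε1).trans_eq (div_eq_inv_mul _ _))
    (abs_mul_sin_le hp hk hks hcos)
    ((abs_cos_sub_one_le hp hk hks hcos).trans_eq (div_eq_inv_mul _ _))

end
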